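/- If A_{-{1}} > 0, A_{-{n}} > 0, and A_{-{1,n}} < A_{-{n}} (cancellation), then A_{-{1}} < A_{-{n}}; consequently, since A_{-{i}} ≤ 0 for all 2 ≤ i ≤ n−1 under the label generation with p > −1, sample n is the most influential single sample, i.e., A_{-{n}} ≥ A_{-{i}} for all 1 ≤ i ≤ n. -/

import Mathlib

open Matrix Finset

noncomputable section

/-- The Gram matrix `X₋ₛᵀ X₋ₛ` of the rows of `X` outside `S`. -/
def gramOut {n d : ℕ} (X : Matrix (Fin n) (Fin d) ℝ) (S : Finset (Fin n)) :
    Matrix (Fin d) (Fin d) ℝ :=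
  ∑ i ∈ Sᶜ, vecMulVec (X i) (X i)

/-- The leave-`S`-out OLS estimator `θ̂₋ₛ = (X₋ₛᵀX₋ₛ)⁻¹ X₋ₛᵀ y₋ₛ`. -/
def olsOut {n d : ℕ} (X : Matrix (Fin n) (Fin d) ℝ) (y : Fin n → ℝ)
    (S : Finset (Fin n)) : Fin d → ℝ :=
  (gramOut X S)⁻¹ *ᵥ (∑ i ∈ Sᶜ, y i • X i)

/-- The full OLS estimator `θ̂ = (XᵀX)⁻¹ Xᵀ y`. -/
def ols {n d : ℕ} (X : Matrix (Fin n) (Fin d) ℝ) (y : Fin n → ℝ) : Fin d → ℝ :=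
  olsOut X y ∅

/-- The actual effect `A₋ₛ = x_testᵀ (θ̂₋ₛ - θ̂)` of removing the samples in `S`. -/
def effect {n d : ℕ} (X : Matrix (Fin n) (Fin d) ℝ) (y : Fin n → ℝ)
    (xt : Fin d → ℝ) (S : Finset (Fin n)) : ℝ :=
  xt ⬝ᵥ (olsOut X y S - ols X y)

/-- The (cross-)leverage score `hᵢⱼ = xᵢᵀ N⁻¹ xⱼ` with `N = XᵀX`. -/
def lev {n d : ℕ} (X : Matrix (Fin n) (Fin d) ℝ) (i j : Fin n) : ℝ :=
  X i ⬝ᵥ ((Xᵀ * X)⁻¹ *ᵥ X j)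

/-- The negative residual `rᵢ = xᵢᵀ θ̂ - yᵢ`. -/
def resid {n d : ℕ} (X : Matrix (Fin n) (Fin d) ℝ) (y : Fin n → ℝ) (i : Fin n) : ℝ :=
  X i ⬝ᵥ ols X y - y i

/-- The generated labels `y = Xθ* - e`, `e = (ε,0,…,0,pε)ᵀ` (with the index `i₁`
playing the role of sample 1 and `iₙ` that of sample n). -/
def ygen {n d : ℕ} (X : Matrix (Fin n) (Fin d) ℝ) (θstar : Fin d → ℝ) (ε p : ℝ)
    (i₁ iₙ : Fin n) : Fin n → ℝ :=
  fun i => X i ⬝ᵥ θstar - (if i = i₁ then ε else if i = iₙ then p * ε else 0)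

/-- The test point `x_test = (x₁ + p xₙ)/(p+1)`. -/
def xtest {n d : ℕ} (X : Matrix (Fin n) (Fin d) ℝ) (p : ℝ) (i₁ iₙ : Fin n) :
    Fin d → ℝ :=
  fun j => (X i₁ j + p * X iₙ j) / (p + 1)

/-! Removing both perturbed samples leaves noiseless data, so `θ̂₋{1,n} = θ*`; single removals
follow the Sherman–Morrison leave-one-out formula, under which a middle sample has
`A₋{i} = -ε wᵢ² / ((p + 1)(1 - hᵢᵢ)) ≤ 0` with `wᵢ = h₁ᵢ + p hₙᵢ`. Writing `H₁ = h₁₁`,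
`Hₙ = hₙₙ`, `h = h₁ₙ`, cancellation becomes `p h + H₁(1 - Hₙ) + h² < 0`, and
`A₋{n} - A₋{1}` is a positive combination of this defect and of
`p²((1 - H₁)Hₙ + h²) + p h`, which is positive by the identity
`((1 - H₁)Hₙ + h²)(H₁(1 - Hₙ) + h²) - h² = ((1 - H₁)(1 - Hₙ) - h²)(H₁Hₙ - h²)`. -/

section LeastSquares

variable {n d : ℕ} (X : Matrix (Fin n) (Fin d) ℝ)

theorem transpose_mul_self_eq_sum_vecMulVec : Xᵀ * X = ∑ i, vecMulVec (X i) (X i) := by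
  ext j k
  simp only [Matrix.sum_apply, vecMulVec_apply, Matrix.mul_apply, transpose_apply]

theorem gramOut_empty : gramOut X ∅ = Xᵀ * X := by
  rw [gramOut, compl_empty, transpose_mul_self_eq_sum_vecMulVec]

theorem gramOut_eq_sub_sum (S : Finset (Fin n)) :
    gramOut X S = Xᵀ * X - ∑ i ∈ S, vecMulVec (X i) (X i) := by
  rw [transpose_mul_self_eq_sum_vecMulVec, ← sum_compl_add_sum S, add_sub_cancel_right, gramOut]

theorem gramOut_mulVec (S : Finset (Fin n)) (θ : Fin d → ℝ) :
    gramOut X S *ᵥ θ = ∑ i ∈ Sᶜ, (X i ⬝ᵥ θ) • X i := by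
  simp only [gramOut, sum_mulVec, vecMulVec_mulVec, op_smul_eq_smul]

theorem lev_comm (i j : Fin n) : lev X i j = lev X j i := by
  rw [lev, lev, dotProduct_mulVec, ← mulVec_transpose, transpose_nonsing_inv, transpose_mul,
    transpose_transpose, dotProduct_comm]

variable {X}

theorem olsOut_eq_of_gramOut_mulVec {y : Fin n → ℝ} {S : Finset (Fin n)} {θ : Fin d → ℝ}
    (hS : IsUnit (gramOut X S).det) (h : gramOut X S *ᵥ θ = ∑ i ∈ Sᶜ, y i • X i) :
    olsOut X y S = θ := by
  rw [olsOut, ← h, mulVec_mulVec, nonsing_inv_mul _ hS, one_mulVec]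

theorem olsOut_eq_of_forall_notMem {y : Fin n → ℝ} {S : Finset (Fin n)} {θ : Fin d → ℝ}
    (hS : IsUnit (gramOut X S).det) (hy : ∀ i ∉ S, y i = X i ⬝ᵥ θ) : olsOut X y S = θ :=
  olsOut_eq_of_gramOut_mulVec hS <| by
    rw [gramOut_mulVec]
    exact sum_congr rfl fun i hi => by rw [hy i (mem_compl.1 hi)]

theorem gram_mulVec_inv_gram_mulVec (hN : IsUnit (Xᵀ * X).det) (u : Fin d → ℝ) :
    (Xᵀ * X) *ᵥ ((Xᵀ * X)⁻¹ *ᵥ u) = u := by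
  rw [mulVec_mulVec, mul_nonsing_inv _ hN, one_mulVec]

theorem gram_mulVec_ols (hN : IsUnit (Xᵀ * X).det) (y : Fin n → ℝ) :
    (Xᵀ * X) *ᵥ ols X y = ∑ i, y i • X i := by
  rw [ols, olsOut, gramOut_empty, compl_empty, gram_mulVec_inv_gram_mulVec hN]

theorem sq_lev_self_le (hN : IsUnit (Xᵀ * X).det) (i : Fin n) : lev X i i ^ 2 ≤ lev X i i := by
  set v := (Xᵀ * X)⁻¹ *ᵥ X i
  have hv : lev X i i = X *ᵥ v ⬝ᵥ X *ᵥ v := by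
    rw [dotProduct_mulVec, ← mulVec_transpose, mulVec_mulVec, gram_mulVec_inv_gram_mulVec hN,
      lev, dotProduct_comm]
  calc lev X i i ^ 2 = (X *ᵥ v) i * (X *ᵥ v) i := sq _
    _ ≤ ∑ j, (X *ᵥ v) j * (X *ᵥ v) j :=
        single_le_sum (fun j _ => mul_self_nonneg ((X *ᵥ v) j)) (mem_univ i)
    _ = lev X i i := hv.symm

theorem lev_self_ne_one (hN : IsUnit (Xᵀ * X).det) {i : Fin n}
    (hi : IsUnit (gramOut X {i}).det) : lev X i i ≠ 1 := by
  intro h1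
  have hker : gramOut X {i} *ᵥ ((Xᵀ * X)⁻¹ *ᵥ X i) = 0 := by
    rw [gramOut_eq_sub_sum, sum_singleton, sub_mulVec, gram_mulVec_inv_gram_mulVec hN,
      vecMulVec_mulVec, op_smul_eq_smul, ← lev, h1, one_smul, sub_self]
  have h0 : lev X i i = 0 := by
    rw [lev, eq_zero_of_mulVec_eq_zero hi.ne_zero hker, dotProduct_zero]
  exact one_ne_zero (h1.symm.trans h0)

theorem lev_self_nonneg (hN : IsUnit (Xᵀ * X).det) (i : Fin n) : 0 ≤ lev X i i := by
  nlinarith [sq_lev_self_le hN i]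

theorem lev_self_lt_one (hN : IsUnit (Xᵀ * X).det) {i : Fin n}
    (hi : IsUnit (gramOut X {i}).det) : lev X i i < 1 :=
  lt_of_le_of_ne (by nlinarith [sq_lev_self_le hN i]) (lev_self_ne_one hN hi)

theorem olsOut_singleton (hN : IsUnit (Xᵀ * X).det) {i : Fin n}
    (hi : IsUnit (gramOut X {i}).det) (y : Fin n → ℝ) :
    olsOut X y {i} = ols X y + (resid X y i / (1 - lev X i i)) • ((Xᵀ * X)⁻¹ *ᵥ X i) := by
  have hc : resid X y i / (1 - lev X i i) * (1 - lev X i i) = X i ⬝ᵥ ols X y - y i :=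
    div_mul_cancel₀ _ (sub_ne_zero.2 (lev_self_ne_one hN hi).symm)
  refine olsOut_eq_of_gramOut_mulVec hi ?_
  rw [gramOut_eq_sub_sum, sum_singleton, sub_mulVec, vecMulVec_mulVec, op_smul_eq_smul,
    mulVec_add, mulVec_smul, gram_mulVec_ols hN, gram_mulVec_inv_gram_mulVec hN, dotProduct_add,
    dotProduct_smul, smul_eq_mul, ← lev, compl_singleton, sum_erase_eq_sub (mem_univ i)]
  linear_combination (norm := module) hc • X i

theorem effect_singleton (hN : IsUnit (Xᵀ * X).det) {i : Fin n}
    (hi : IsUnit (gramOut X {i}).det) (y : Fin n → ℝ) (t : Fin d → ℝ) :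
    effect X y t {i} = resid X y i / (1 - lev X i i) * (t ⬝ᵥ (Xᵀ * X)⁻¹ *ᵥ X i) := by
  rw [effect, olsOut_singleton hN hi, add_sub_cancel_left, dotProduct_smul, smul_eq_mul]

end LeastSquares

section GeneratedLabels

variable {n d : ℕ} {X : Matrix (Fin n) (Fin d) ℝ} (θ : Fin d → ℝ) (ε p : ℝ) {i₁ iₙ : Fin n}

theorem sum_ygen_smul (hne : i₁ ≠ iₙ) :
    ∑ i, ygen X θ ε p i₁ iₙ i • X i = (Xᵀ * X) *ᵥ θ - ε • (X i₁ + p • X iₙ) := by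
  have hnoise : ∀ i, (if i = i₁ then ε else if i = iₙ then p * ε else 0) • X i =
      (if i = i₁ then ε • X i₁ else 0) + (if i = iₙ then (p * ε) • X iₙ else 0) := by
    intro i
    split_ifs with h₁ hₙ <;> subst_vars <;> simp_all
  rw [← gramOut_empty, gramOut_mulVec, compl_empty]
  simp only [ygen, sub_smul, sum_sub_distrib, hnoise, sum_add_distrib, sum_ite_eq', mem_univ,
    if_true]
  module

theorem ols_ygen (hne : i₁ ≠ iₙ) (hN : IsUnit (Xᵀ * X).det) :
    ols X (ygen X θ ε p i₁ iₙ) = θ - ε • ((Xᵀ * X)⁻¹ *ᵥ (X i₁ + p • X iₙ)) := by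
  refine olsOut_eq_of_gramOut_mulVec (by rwa [gramOut_empty]) ?_
  rw [gramOut_empty, compl_empty, sum_ygen_smul θ ε p hne, mulVec_sub, mulVec_smul,
    gram_mulVec_inv_gram_mulVec hN]

theorem resid_ygen (hne : i₁ ≠ iₙ) (hN : IsUnit (Xᵀ * X).det) (i : Fin n) :
    resid X (ygen X θ ε p i₁ iₙ) i = (if i = i₁ then ε else if i = iₙ then p * ε else 0) -
      ε * (lev X i₁ i + p * lev X iₙ i) := by
  rw [resid, ols_ygen θ ε p hne hN, ygen, lev_comm X i₁, lev_comm X iₙ]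
  simp only [mulVec_add, mulVec_smul, dotProduct_sub, dotProduct_smul, dotProduct_add, lev,
    smul_eq_mul]
  ring

theorem xtest_dotProduct (v : Fin d → ℝ) :
    xtest X p i₁ iₙ ⬝ᵥ v = (X i₁ ⬝ᵥ v + p * X iₙ ⬝ᵥ v) / (p + 1) := by
  simp only [xtest, dotProduct, div_mul_eq_mul_div, ← sum_div, add_mul, sum_add_distrib,
    mul_assoc, ← mul_sum]

theorem effect_ygen_singleton (hne : i₁ ≠ iₙ) (hN : IsUnit (Xᵀ * X).det) {i : Fin n}
    (hi : IsUnit (gramOut X {i}).det) :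
    effect X (ygen X θ ε p i₁ iₙ) (xtest X p i₁ iₙ) {i} = ε / (p + 1) *
      (((if i = i₁ then 1 else if i = iₙ then p else 0) - (lev X i₁ i + p * lev X iₙ i)) *
        (lev X i₁ i + p * lev X iₙ i) / (1 - lev X i i)) := by
  rw [effect_singleton hN hi, resid_ygen θ ε p hne hN, xtest_dotProduct]
  split_ifs <;> simp only [lev] <;> ring

theorem effect_ygen_singleton_nonpos (hε : 0 < ε) (hp : -1 < p) (hne : i₁ ≠ iₙ)
    (hN : IsUnit (Xᵀ * X).det) {i : Fin n} (hi : IsUnit (gramOut X {i}).det) (hi₁ : i ≠ i₁)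
    (hiₙ : i ≠ iₙ) : effect X (ygen X θ ε p i₁ iₙ) (xtest X p i₁ iₙ) {i} ≤ 0 := by
  rw [effect_ygen_singleton θ ε p hne hN hi, if_neg hi₁, if_neg hiₙ, zero_sub, neg_mul,
    neg_div, mul_neg, neg_nonpos]
  exact mul_nonneg (div_nonneg hε.le (by linarith))
    (div_nonneg (mul_self_nonneg _) (sub_nonneg.2 (lev_self_lt_one hN hi).le))

theorem effect_ygen_pair (hne : i₁ ≠ iₙ) (hN : IsUnit (Xᵀ * X).det)
    (h₁ₙ : IsUnit (gramOut X {i₁, iₙ}).det) :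
    effect X (ygen X θ ε p i₁ iₙ) (xtest X p i₁ iₙ) {i₁, iₙ} = ε / (p + 1) *
      ((lev X i₁ i₁ + p * lev X iₙ i₁) + p * (lev X i₁ iₙ + p * lev X iₙ iₙ)) := by
  have hfit : olsOut X (ygen X θ ε p i₁ iₙ) {i₁, iₙ} = θ :=
    olsOut_eq_of_forall_notMem h₁ₙ fun i hi => by
      simp only [mem_insert, mem_singleton, not_or] at hi
      simp [ygen, hi.1, hi.2]
  rw [effect, hfit, ols_ygen θ ε p hne hN, sub_sub_cancel, dotProduct_smul, xtest_dotProduct]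
  simp only [mulVec_add, mulVec_smul, dotProduct_add, dotProduct_smul, lev, smul_eq_mul]
  ring

end GeneratedLabels

theorem scalar_effect_lt_of_cancellation {H₁ Hₙ h p : ℝ} (hH₁ : 0 ≤ H₁) (hH₁' : H₁ < 1)
    (hHₙ : 0 ≤ Hₙ) (hHₙ' : Hₙ < 1) (hD : 0 < (1 - H₁) * (1 - Hₙ) - h ^ 2)
    (hA : 0 < (1 - (H₁ + p * h)) * (H₁ + p * h) / (1 - H₁))
    (hcanc : H₁ + p * h + p * (h + p * Hₙ) < (p - (h + p * Hₙ)) * (h + p * Hₙ) / (1 - Hₙ)) :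
    (1 - (H₁ + p * h)) * (H₁ + p * h) / (1 - H₁) <
      (p - (h + p * Hₙ)) * (h + p * Hₙ) / (1 - Hₙ) := by
  have ha : 0 < 1 - H₁ := sub_pos.2 hH₁'
  have hb : 0 < 1 - Hₙ := sub_pos.2 hHₙ'
  have hw : 0 < H₁ + p * h := by
    have := (div_pos_iff_of_pos_right ha).1 hA
    nlinarith
  have hT : 0 < -(p * h) - H₁ * (1 - Hₙ) - h ^ 2 := by
    rw [lt_div_iff₀ hb] at hcanc
    linear_combination hcanc
  have hCS : h ^ 2 < H₁ * Hₙ := by linear_combination hw + hT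
  have hQ : 0 ≤ H₁ * (1 - Hₙ) + h ^ 2 := by
    have := mul_nonneg hH₁ hb.le; positivity
  have hP : 0 ≤ (1 - H₁) * Hₙ + h ^ 2 := by
    have := mul_nonneg ha.le hHₙ; positivity
  have hs : 0 < -(p * h) := by linarith
  have hPs : h ^ 2 < ((1 - H₁) * Hₙ + h ^ 2) * -(p * h) :=
    calc h ^ 2 < ((1 - H₁) * Hₙ + h ^ 2) * (H₁ * (1 - Hₙ) + h ^ 2) := by
          linear_combination mul_pos hD (sub_pos.2 hCS)
      _ ≤ ((1 - H₁) * Hₙ + h ^ 2) * -(p * h) := mul_le_mul_of_nonneg_left (by linarith) hP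
  have hG : 0 < p ^ 2 * ((1 - H₁) * Hₙ + h ^ 2) + p * h := by
    have hp : 0 < p ^ 2 := by
      have : p ≠ 0 := by rintro rfl; simp at hs
      positivity
    refine pos_of_mul_pos_right (a := -(p * h)) ?_ hs.le
    linear_combination mul_pos hp (sub_pos.2 hPs)
  rw [div_lt_div_iff₀ ha hb]
  linear_combination mul_pos hb hG + mul_pos ha hT

theorem cancellation_implies_n_most_influential_general
    (n d : ℕ) (hn : 3 ≤ n)
    (X : Matrix (Fin n) (Fin d) ℝ) (θstar : Fin d → ℝ) (ε : ℝ) (hε : 0 < ε)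
    (p : ℝ) (hp : -1 < p)
    (i₁ iₙ : Fin n) (hi₁ : (i₁ : ℕ) = 0) (hiₙ : (iₙ : ℕ) = n - 1)
    (hN : IsUnit (Xᵀ * X).det)
    (hout : ∀ i : Fin n, IsUnit (gramOut X {i}).det)
    (hout₁ₙ : IsUnit (gramOut X {i₁, iₙ}).det)
    (hD : 0 < (1 - lev X i₁ i₁) * (1 - lev X iₙ iₙ) - (lev X i₁ iₙ) ^ 2)
    (hA₁ : 0 < effect X (ygen X θstar ε p i₁ iₙ) (xtest X p i₁ iₙ) {i₁})
    (hcanc : effect X (ygen X θstar ε p i₁ iₙ) (xtest X p i₁ iₙ) {i₁, iₙ} <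
      effect X (ygen X θstar ε p i₁ iₙ) (xtest X p i₁ iₙ) {iₙ}) :
    effect X (ygen X θstar ε p i₁ iₙ) (xtest X p i₁ iₙ) {i₁} <
      effect X (ygen X θstar ε p i₁ iₙ) (xtest X p i₁ iₙ) {iₙ} ∧
    (∀ i, i ≠ i₁ → i ≠ iₙ →
      effect X (ygen X θstar ε p i₁ iₙ) (xtest X p i₁ iₙ) {i} ≤ 0) ∧
    (∀ i : Fin n, effect X (ygen X θstar ε p i₁ iₙ) (xtest X p i₁ iₙ) {i} ≤
      effect X (ygen X θstar ε p i₁ iₙ) (xtest X p i₁ iₙ) {iₙ}) := by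
  have hne : i₁ ≠ iₙ := fun h => by rw [h] at hi₁; omega
  have hc : 0 < ε / (p + 1) := div_pos hε (by linarith)
  have hmiddle : ∀ i, i ≠ i₁ → i ≠ iₙ →
      effect X (ygen X θstar ε p i₁ iₙ) (xtest X p i₁ iₙ) {i} ≤ 0 := fun i =>
    effect_ygen_singleton_nonpos θstar ε p hε hp hne hN (hout i)
  have hlt : effect X (ygen X θstar ε p i₁ iₙ) (xtest X p i₁ iₙ) {i₁} <
      effect X (ygen X θstar ε p i₁ iₙ) (xtest X p i₁ iₙ) {iₙ} := by
    rw [effect_ygen_singleton θstar ε p hne hN (hout i₁), if_pos rfl, lev_comm X iₙ i₁]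
      at hA₁ ⊢
    rw [effect_ygen_singleton θstar ε p hne hN (hout iₙ), if_neg hne.symm, if_pos rfl]
      at hcanc ⊢
    rw [effect_ygen_pair θstar ε p hne hN hout₁ₙ, lev_comm X iₙ i₁, mul_lt_mul_iff_right₀ hc]
      at hcanc
    rw [mul_lt_mul_iff_right₀ hc]
    exact scalar_effect_lt_of_cancellation (lev_self_nonneg hN i₁) (lev_self_lt_one hN (hout i₁))
      (lev_self_nonneg hN iₙ) (lev_self_lt_one hN (hout iₙ)) hD (pos_of_mul_pos_right hA₁ hc.le)
      hcanc
  refine ⟨hlt, hmiddle, fun i => ?_⟩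
  by_cases h₁ : i = i₁
  · exact h₁ ▸ hlt.le
  by_cases hₙ : i = iₙ
  · exact hₙ ▸ le_rfl
  exact (hmiddle i h₁ hₙ).trans (hA₁.trans hlt).le

/-- technical lemma of Appendix B.3: if `A₋{1} > 0`, `A₋{n} > 0`
and `A₋{1,n} < A₋{n}` (cancellation), then `A₋{1} < A₋{n}`; consequently, since
`A₋{i} ≤ 0` for all middle indices under the label generation with `p > -1`, sample
`n` is the most influential single sample: `A₋{n} ≥ A₋{i}` for all `i`. -/
theorem cancellation_implies_n_most_influential
    (n d : ℕ) (hn : 3 ≤ n) (hd : 0 < d)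
    (X : Matrix (Fin n) (Fin d) ℝ) (θstar : Fin d → ℝ) (ε : ℝ) (hε : 0 < ε)
    (p : ℝ) (hp : -1 < p)
    (i₁ iₙ : Fin n) (hi₁ : (i₁ : ℕ) = 0) (hiₙ : (iₙ : ℕ) = n - 1)
    (hone : ∀ i, X i ⟨0, hd⟩ = 1)
    (hN : IsUnit (Xᵀ * X).det)
    (hmid : IsUnit (∑ i ∈ ({i₁, iₙ} : Finset (Fin n))ᶜ, vecMulVec (X i) (X i)).det)
    (hout : ∀ i : Fin n, IsUnit (gramOut X {i}).det)
    (hout₁ₙ : IsUnit (gramOut X {i₁, iₙ}).det)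
    (h11 : lev X i₁ i₁ < 1) (hnn : lev X iₙ iₙ < 1)
    (hD : 0 < (1 - lev X i₁ i₁) * (1 - lev X iₙ iₙ) - (lev X i₁ iₙ) ^ 2)
    (hA₁ : 0 < effect X (ygen X θstar ε p i₁ iₙ) (xtest X p i₁ iₙ) {i₁})
    (hAₙ : 0 < effect X (ygen X θstar ε p i₁ iₙ) (xtest X p i₁ iₙ) {iₙ})
    (hcanc : effect X (ygen X θstar ε p i₁ iₙ) (xtest X p i₁ iₙ) {i₁, iₙ} <
      effect X (ygen X θstar ε p i₁ iₙ) (xtest X p i₁ iₙ) {iₙ}) :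
    effect X (ygen X θstar ε p i₁ iₙ) (xtest X p i₁ iₙ) {i₁} <
      effect X (ygen X θstar ε p i₁ iₙ) (xtest X p i₁ iₙ) {iₙ} ∧
    (∀ i, i ≠ i₁ → i ≠ iₙ →
      effect X (ygen X θstar ε p i₁ iₙ) (xtest X p i₁ iₙ) {i} ≤ 0) ∧
    (∀ i : Fin n, effect X (ygen X θstar ε p i₁ iₙ) (xtest X p i₁ iₙ) {i} ≤
      effect X (ygen X θstar ε p i₁ iₙ) (xtest X p i₁ iₙ) {iₙ}) :=
  cancellation_implies_n_most_influential_general n d hn X θstar ε hε p hp i₁ iₙ hi₁ hiₙ hN hout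
    hout₁ₙ hD hA₁ hcanc
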